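/- Let α > 0 and c > 0, and let β, γ, δ ∈ ℝ. The function φ(x,y,t) = e^{Dt}(cos(√(2α)x)(c₁cos(√c y) + c₃sin(√c y)) + sin(√(2α)x)(c₂cos(√c y) + c₄sin(√c y))), where D = 2α(2α+δ) + 4αc + c² − β, satisfies φ_xx = −2αφ, φ_yy = −cφ, and for every real u the identity φ·(αu + β + c·g(u)) + φ_t + g(u)φ_yy − φ_yyyy + (u/2 + δ)φ_xx − 2φ_xxyy − φ_xxxx = 0, where g is any smooth function; this establishes nonlinear self-adjointness of u_t = (α/2)u² + βu + γ + c∫g(u)du + g'(u)u_y² + g(u)u_yy − u_yyyy + (1/2)u_x² + (u/2 + δ)u_xx − 2u_xxyy − u_xxxx with f'(u) = αu + β + c g(u). -/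
import Mathlib


noncomputable section

def px (f : ℝ → ℝ → ℝ → ℝ) : ℝ → ℝ → ℝ → ℝ := fun x y t => deriv (fun s => f s y t) x
def py (f : ℝ → ℝ → ℝ → ℝ) : ℝ → ℝ → ℝ → ℝ := fun x y t => deriv (fun s => f x s t) y
def pt (f : ℝ → ℝ → ℝ → ℝ) : ℝ → ℝ → ℝ → ℝ := fun x y t => deriv (fun s => f x y s) t

/-- The substitution
`φ(x,y,t) = e^{Dt}(cos(√(2α)x)(c₁cos(√c y)+c₃sin(√c y)) + sin(√(2α)x)(c₂cos(√c y)+c₄sin(√c y)))`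
with `D = 2α(2α+δ) + 4αc + c² − β`. -/
def Φ (α β δ c c₁ c₂ c₃ c₄ : ℝ) : ℝ → ℝ → ℝ → ℝ :=
  fun x y t => Real.exp ((2 * α * (2 * α + δ) + 4 * α * c + c ^ 2 - β) * t) *
    (Real.cos (Real.sqrt (2 * α) * x) *
        (c₁ * Real.cos (Real.sqrt c * y) + c₃ * Real.sin (Real.sqrt c * y))
      + Real.sin (Real.sqrt (2 * α) * x) *
        (c₂ * Real.cos (Real.sqrt c * y) + c₄ * Real.sin (Real.sqrt c * y))) 

/-- Generic separable ansatz. -/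
def Ψ (d a b p q r s : ℝ) : ℝ → ℝ → ℝ → ℝ :=
  fun x y t => Real.exp (d * t) *
    (Real.cos (a * x) * (p * Real.cos (b * y) + q * Real.sin (b * y))
      + Real.sin (a * x) * (r * Real.cos (b * y) + s * Real.sin (b * y)))

lemma hmul (a x : ℝ) : HasDerivAt (fun z : ℝ => a * z) a x := by
  simpa using (hasDerivAt_id x).const_mul a

lemma px_Ψ (d a b p q r s : ℝ) :
    px (Ψ d a b p q r s) = Ψ d a b (a * r) (a * s) (-(a * p)) (-(a * q)) := by
  funext x y t
  have hcos : HasDerivAt (fun z => Real.cos (a * z)) (-Real.sin (a * x) * a) x :=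
    (Real.hasDerivAt_cos (a * x)).comp x (hmul a x)
  have hsin : HasDerivAt (fun z => Real.sin (a * z)) (Real.cos (a * x) * a) x :=
    (Real.hasDerivAt_sin (a * x)).comp x (hmul a x)
  have h := ((hcos.mul_const (p * Real.cos (b * y) + q * Real.sin (b * y))).add
      (hsin.mul_const (r * Real.cos (b * y) + s * Real.sin (b * y)))).const_mul
      (Real.exp (d * t))
  simp only [px, Ψ]
  exact h.deriv.trans (by ring)

lemma py_Ψ (d a b p q r s : ℝ) :
    py (Ψ d a b p q r s) = Ψ d a b (b * q) (-(b * p)) (b * s) (-(b * r)) := by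
  funext x y t
  have hcos : HasDerivAt (fun z => Real.cos (b * z)) (-Real.sin (b * y) * b) y :=
    (Real.hasDerivAt_cos (b * y)).comp y (hmul b y)
  have hsin : HasDerivAt (fun z => Real.sin (b * z)) (Real.cos (b * y) * b) y :=
    (Real.hasDerivAt_sin (b * y)).comp y (hmul b y)
  have h1 : HasDerivAt
      (fun z => Real.exp (d * t) *
        (Real.cos (a * x) * (p * Real.cos (b * z) + q * Real.sin (b * z))
          + Real.sin (a * x) * (r * Real.cos (b * z) + s * Real.sin (b * z))))
      (Real.exp (d * t) *
        (Real.cos (a * x) * (p * (-Real.sin (b * y) * b) + q * (Real.cos (b * y) * b))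
          + Real.sin (a * x) * (r * (-Real.sin (b * y) * b) + s * (Real.cos (b * y) * b)))) y := by
    exact ((((hcos.const_mul p).add (hsin.const_mul q)).const_mul (Real.cos (a * x))).add
      (((hcos.const_mul r).add (hsin.const_mul s)).const_mul (Real.sin (a * x)))).const_mul
      (Real.exp (d * t))
  simp only [py, Ψ]
  exact h1.deriv.trans (by ring)

lemma pt_Ψ (d a b p q r s : ℝ) :
    pt (Ψ d a b p q r s) = Ψ d a b (d * p) (d * q) (d * r) (d * s) := by
  funext x y t
  have hexp : HasDerivAt (fun z => Real.exp (d * z)) (Real.exp (d * t) * d) t :=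
    (Real.hasDerivAt_exp (d * t)).comp t (hmul d t)
  have h := hexp.mul_const
    (Real.cos (a * x) * (p * Real.cos (b * y) + q * Real.sin (b * y))
      + Real.sin (a * x) * (r * Real.cos (b * y) + s * Real.sin (b * y)))
  simp only [pt, Ψ]
  exact h.deriv.trans (by ring)

lemma pxx_Ψ (d a b p q r s : ℝ) :
    px (px (Ψ d a b p q r s)) =
      Ψ d a b (-(a * a) * p) (-(a * a) * q) (-(a * a) * r) (-(a * a) * s) := by
  rw [px_Ψ, px_Ψ]
  funext x y t; simp only [Ψ]; ring

lemma pyy_Ψ (d a b p q r s : ℝ) :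
    py (py (Ψ d a b p q r s)) =
      Ψ d a b (-(b * b) * p) (-(b * b) * q) (-(b * b) * r) (-(b * b) * s) := by
  rw [py_Ψ, py_Ψ]
  funext x y t; simp only [Ψ]; ring

/-- `φ` satisfies `φ_xx = −2αφ`, `φ_yy = −cφ`, and the nonlinear
self-adjointness condition with `f'(u) = αu + β + c·g(u)` and `r(u) = u/2 + δ`. -/
theorem phi_nonlinear_self_adjointness_integral_case
    (α β γ δ c : ℝ) (hα : 0 < α) (hc : 0 < c) (g : ℝ → ℝ) (hg : ContDiff ℝ (⊤ : ℕ∞) g)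
    (c₁ c₂ c₃ c₄ : ℝ) :
    (∀ x y t : ℝ,
        px (px (Φ α β δ c c₁ c₂ c₃ c₄)) x y t = -(2 * α) * Φ α β δ c c₁ c₂ c₃ c₄ x y t ∧
        py (py (Φ α β δ c c₁ c₂ c₃ c₄)) x y t = -c * Φ α β δ c c₁ c₂ c₃ c₄ x y t) ∧
    (∀ x y t u : ℝ,
      Φ α β δ c c₁ c₂ c₃ c₄ x y t * (α * u + β + c * g u)
        + pt (Φ α β δ c c₁ c₂ c₃ c₄) x y t
        + g u * py (py (Φ α β δ c c₁ c₂ c₃ c₄)) x y t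
        - py (py (py (py (Φ α β δ c c₁ c₂ c₃ c₄)))) x y t
        + (u / 2 + δ) * px (px (Φ α β δ c c₁ c₂ c₃ c₄)) x y t
        - 2 * px (px (py (py (Φ α β δ c c₁ c₂ c₃ c₄)))) x y t
        - px (px (px (px (Φ α β δ c c₁ c₂ c₃ c₄)))) x y t = 0) := by
  set a := Real.sqrt (2 * α) with ha'
  set b := Real.sqrt c with hb'
  have ha2 : a * a = 2 * α := Real.mul_self_sqrt (by linarith)
  have hb2 : b * b = c := Real.mul_self_sqrt hc.le
  have hΦΨ : Φ α β δ c c₁ c₂ c₃ c₄ =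
      Ψ (2 * α * (2 * α + δ) + 4 * α * c + c ^ 2 - β) a b c₁ c₃ c₂ c₄ := rfl
  set d := 2 * α * (2 * α + δ) + 4 * α * c + c ^ 2 - β with hd
  have E1 : px (px (Φ α β δ c c₁ c₂ c₃ c₄)) =
      Ψ d a b (-(a * a) * c₁) (-(a * a) * c₃) (-(a * a) * c₂) (-(a * a) * c₄) := by
    rw [hΦΨ, pxx_Ψ]
  have E2 : py (py (Φ α β δ c c₁ c₂ c₃ c₄)) =
      Ψ d a b (-(b * b) * c₁) (-(b * b) * c₃) (-(b * b) * c₂) (-(b * b) * c₄) := by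
    rw [hΦΨ, pyy_Ψ]
  have E3 : py (py (py (py (Φ α β δ c c₁ c₂ c₃ c₄)))) =
      Ψ d a b ((b * b) * (b * b) * c₁) ((b * b) * (b * b) * c₃)
        ((b * b) * (b * b) * c₂) ((b * b) * (b * b) * c₄) := by
    rw [hΦΨ, pyy_Ψ, pyy_Ψ]
    funext x y t; simp only [Ψ]; ring
  have E4 : px (px (py (py (Φ α β δ c c₁ c₂ c₃ c₄)))) =
      Ψ d a b ((a * a) * (b * b) * c₁) ((a * a) * (b * b) * c₃)
        ((a * a) * (b * b) * c₂) ((a * a) * (b * b) * c₄) := by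
    rw [hΦΨ, pyy_Ψ, pxx_Ψ]
    funext x y t; simp only [Ψ]; ring
  have E5 : px (px (px (px (Φ α β δ c c₁ c₂ c₃ c₄)))) =
      Ψ d a b ((a * a) * (a * a) * c₁) ((a * a) * (a * a) * c₃)
        ((a * a) * (a * a) * c₂) ((a * a) * (a * a) * c₄) := by
    rw [hΦΨ, pxx_Ψ, pxx_Ψ]
    funext x y t; simp only [Ψ]; ring
  have E6 : pt (Φ α β δ c c₁ c₂ c₃ c₄) =
      Ψ d a b (d * c₁) (d * c₃) (d * c₂) (d * c₄) := by
    rw [hΦΨ, pt_Ψ]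
  refine ⟨fun x y t => ⟨?_, ?_⟩, fun x y t u => ?_⟩
  · rw [E1, hΦΨ]; simp only [Ψ, ha2]; ring
  · rw [E2, hΦΨ]; simp only [Ψ, hb2]; ring
  · rw [E5, E3, E4, E1, E2, E6, hΦΨ]
    simp only [Ψ, ha2, hb2, hd]
    ring
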